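/- Let (L^c_1, …, L^c_n, L_1) be an exchangeable family of n+1 real-valued random variables (ties allowed), where n ≥ 1. Let L^c_{(1)} ≤ … ≤ L^c_{(n)} denote the order statistics of the first n variables. Then for every 1 ≤ k ≤ n, Pr[L_1 ≤ L^c_{(k)}] ≥ k/(n+1). -/

import Mathlib

open MeasureTheory

/-- The `i`-th order statistic (0-indexed) of the finite tuple `f : Fin N → ℝ`. -/
noncomputable def orderStat {N : ℕ} (f : Fin N → ℝ) (i : Fin N) : ℝ := f (Tuple.sort f i)

open Finset in
/-- Number of coordinates strictly below the `j`-th one. -/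
noncomputable def cntLt {N : ℕ} (w : Fin N → ℝ) (j : Fin N) : ℕ :=
  (Finset.univ.filter (fun i => w i < w j)).card

open Finset in
lemma cntLt_comp {N : ℕ} (w : Fin N → ℝ) (σ : Equiv.Perm (Fin N)) (j : Fin N) :
    cntLt (w ∘ σ) j = cntLt w (σ j) := by
  classical
  unfold cntLt
  simp only [Function.comp_apply]
  rw [← Finset.card_image_of_injective (univ.filter fun i => w (σ i) < w (σ j)) σ.injective]
  congr 1
  ext i
  simp only [Finset.mem_image, Finset.mem_filter, Finset.mem_univ, true_and, Function.comp]
  constructor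
  · rintro ⟨a, ha, rfl⟩; exact ha
  · intro h; exact ⟨σ.symm i, by simpa using h, by simp⟩

open Finset in
lemma card_filter_val_lt {N k : ℕ} (hk : k ≤ N) :
    ((univ.filter fun p : Fin N => p.val < k)).card = k := by
  classical
  rw [← Finset.card_range k]
  apply Finset.card_bij (fun p _ => p.val)
  · intro a ha; simp only [mem_filter, mem_univ, true_and] at ha; simpa using ha
  · intro a _ b _ h; exact Fin.val_injective h
  · intro b hb
    simp only [Finset.mem_range] at hb
    exact ⟨⟨b, lt_of_lt_of_le hb hk⟩, by simp [hb], rfl⟩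

open Finset in
lemma cntLt_sort_le {N : ℕ} (w : Fin N → ℝ) (p : Fin N) :
    cntLt w (Tuple.sort w p) ≤ p.val := by
  classical
  have hmono := Tuple.monotone_sort w
  have h1 : cntLt w (Tuple.sort w p) ≤ (Finset.Iio p).card := by
    apply Finset.card_le_card_of_injOn (fun i => (Tuple.sort w).symm i)
    · intro i hi
      simp only [Finset.mem_coe, mem_filter, mem_univ, true_and] at hi
      simp only [Finset.mem_coe, Finset.mem_Iio]
      by_contra hq
      push_neg at hq
      have h2 := hmono hq
      simp only [Function.comp_apply, Equiv.apply_symm_apply] at h2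
      exact absurd hi (not_lt.2 h2)
    · intro a _ b _ h; exact (Tuple.sort w).symm.injective h
  calc cntLt w (Tuple.sort w p) ≤ (Finset.Iio p).card := h1
    _ = p.val := by simp

open Finset in
lemma key_card {N k : ℕ} (hk : k ≤ N) (w : Fin N → ℝ) :
    k ≤ (univ.filter fun j => cntLt w j < k).card := by
  classical
  set τ := Tuple.sort w
  have hsub : (univ.filter fun p : Fin N => p.val < k).image τ ⊆
      univ.filter fun j => cntLt w j < k := by
    intro j hj
    simp only [mem_image, mem_filter, mem_univ, true_and] at hj ⊢
    obtain ⟨p, hp, rfl⟩ := hj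
    exact lt_of_le_of_lt (cntLt_sort_le w p) hp
  have h := Finset.card_le_card hsub
  rwa [Finset.card_image_of_injective _ τ.injective, card_filter_val_lt hk] at h

lemma measurable_cntLt {N : ℕ} (j : Fin N) : Measurable fun w : Fin N → ℝ => cntLt w j := by
  classical
  unfold cntLt
  simp_rw [Finset.card_filter]
  exact Finset.measurable_sum _ fun i _ =>
    Measurable.ite (measurableSet_lt (measurable_pi_apply i) (measurable_pi_apply j))
      measurable_const measurable_const

/-- Let `(L^c_1, …, L^c_n, L_1)` be an exchangeable family of `n+1` real random variables
(ties allowed), `n ≥ 1`.  Then for every `1 ≤ k ≤ n`, `Pr[L_1 ≤ L^c_(k)] ≥ k/(n+1)`. -/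
theorem prob_le_order_stat_ge (n : ℕ) (hn : 1 ≤ n)
    {Ω : Type*} [MeasurableSpace Ω] (ℙ : Measure Ω) [IsProbabilityMeasure ℙ]
    (W : Ω → Fin (n + 1) → ℝ) (hW : Measurable W)
    (hexch : ∀ σ : Equiv.Perm (Fin (n + 1)),
      Measure.map (fun ω => W ω ∘ σ) ℙ = Measure.map W ℙ)
    (k : ℕ) (hk1 : 1 ≤ k) (hkn : k ≤ n) :
    (k : ENNReal) / ((n : ENNReal) + 1)
      ≤ ℙ {ω | W ω (Fin.last n)
            ≤ orderStat (fun a : Fin n => W ω a.castSucc) ⟨k - 1, by omega⟩} := by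
  classical
  set A : Fin (n + 1) → Set (Fin (n + 1) → ℝ) := fun j => {w | cntLt w j < k} with hAdef
  have hA : ∀ j, MeasurableSet (A j) := by
    intro j
    exact (measurable_cntLt j) (by trivial : MeasurableSet {m : ℕ | m < k})
  -- all events have the same probability
  have hE : ∀ j, ℙ (W ⁻¹' A j) = ℙ (W ⁻¹' A (Fin.last n)) := by
    intro j
    set σ := Equiv.swap j (Fin.last n) with hσ
    have hmeasσ : Measurable fun ω => W ω ∘ σ :=
      measurable_pi_iff.2 fun i => (measurable_pi_apply (σ i)).comp hW
    have h1 : W ⁻¹' A j = (fun ω => W ω ∘ σ) ⁻¹' A (Fin.last n) := by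
      ext ω
      simp only [Set.mem_preimage, hAdef, Set.mem_setOf_eq]
      rw [cntLt_comp (W ω) σ (Fin.last n), hσ, Equiv.swap_apply_right]
    rw [h1, ← Measure.map_apply hmeasσ (hA _), hexch σ, Measure.map_apply hW (hA _)]
  -- sum bound
  have hsum : (k : ENNReal) ≤ ∑ j : Fin (n + 1), ℙ (W ⁻¹' A j) := by
    have hpt : ∀ ω, (k : ENNReal) ≤ ∑ j : Fin (n + 1), (W ⁻¹' A j).indicator 1 ω := by
      intro ω
      have hcard := key_card (by omega : k ≤ n + 1) (W ω)
      calc (k : ENNReal)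
          ≤ ((Finset.univ.filter fun j : Fin (n+1) => cntLt (W ω) j < k).card : ENNReal) := by
            exact_mod_cast hcard
        _ = ∑ j : Fin (n + 1), (W ⁻¹' A j).indicator 1 ω := by
            rw [Finset.card_filter]
            push_cast
            apply Finset.sum_congr rfl
            intro j _
            by_cases h : cntLt (W ω) j < k <;>
              simp [Set.indicator, hAdef, h]
    calc (k : ENNReal) = ∫⁻ _, (k : ENNReal) ∂ℙ := by simp
      _ ≤ ∫⁻ ω, ∑ j : Fin (n + 1), (W ⁻¹' A j).indicator 1 ω ∂ℙ := lintegral_mono hpt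
      _ = ∑ j : Fin (n + 1), ∫⁻ ω, (W ⁻¹' A j).indicator 1 ω ∂ℙ :=
          lintegral_finset_sum _ (fun j _ => measurable_one.indicator (hW (hA j)))
      _ = ∑ j : Fin (n + 1), ℙ (W ⁻¹' A j) := by
          apply Finset.sum_congr rfl
          intro j _
          exact lintegral_indicator_one (hW (hA j))
  have hNE : (k : ENNReal) ≤ ((n : ENNReal) + 1) * ℙ (W ⁻¹' A (Fin.last n)) := by
    have : ∑ j : Fin (n + 1), ℙ (W ⁻¹' A j)
        = ((n : ENNReal) + 1) * ℙ (W ⁻¹' A (Fin.last n)) := by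
      rw [Finset.sum_congr rfl (fun j _ => hE j)]
      simp [Finset.card_univ, mul_comm]
    rw [← this]; exact hsum
  have hdiv : (k : ENNReal) / ((n : ENNReal) + 1) ≤ ℙ (W ⁻¹' A (Fin.last n)) :=
    ENNReal.div_le_of_le_mul (by rw [mul_comm] at hNE; exact hNE)
  refine hdiv.trans (measure_mono ?_)
  -- inclusion of events
  intro ω hω
  simp only [Set.mem_preimage, hAdef, Set.mem_setOf_eq] at hω ⊢
  by_contra hlt
  push_neg at hlt
  set f : Fin n → ℝ := fun a => W ω a.castSucc with hf
  set σ := Tuple.sort f with hσ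
  have hmono := Tuple.monotone_sort f
  have hsub : (Finset.univ.filter fun p : Fin n => p.val < k).image (fun p => (σ p).castSucc)
      ⊆ Finset.univ.filter fun i : Fin (n+1) => W ω i < W ω (Fin.last n) := by
    intro i hi
    simp only [Finset.mem_image, Finset.mem_filter, Finset.mem_univ, true_and] at hi ⊢
    obtain ⟨p, hp, rfl⟩ := hi
    have hple : p ≤ (⟨k - 1, by omega⟩ : Fin n) := by
      rw [Fin.le_def]; simp; omega
    have h2 : f (σ p) ≤ f (σ ⟨k - 1, by omega⟩) := hmono hple
    have h3 : f (σ ⟨k - 1, by omega⟩) < W ω (Fin.last n) := hlt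
    exact lt_of_le_of_lt h2 h3
  have hc := Finset.card_le_card hsub
  have hinj : Function.Injective fun p : Fin n => (σ p).castSucc :=
    fun a b h => σ.injective (Fin.castSucc_injective n h)
  rw [Finset.card_image_of_injective _ hinj, card_filter_val_lt hkn] at hc
  have : cntLt (W ω) (Fin.last n)
      = (Finset.univ.filter fun i : Fin (n+1) => W ω i < W ω (Fin.last n)).card := rfl
  omega
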